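/- arXiv:1211.6876 — 3 statements merged into one kernel-verified Lean document; each statement's English description precedes it below -/
import Mathlib

section
/- Riesz decomposition, part (a): For a Markov operator T on a von Neumann algebra A, a positive element y ∈ A₊ is a potential (i.e. y = Σ_{n=0}^∞ Tⁿ(x) for some x ∈ A₊) if and only if T(y) ≤ y and Tⁿ(y) → 0 in the strong operator topology as n → ∞. -/
/-! If `y = ∑ₙ Tⁿ x` strongly, the partial sums `S_N` increase to `y`, so normality turns
`T S_N = S_{N+1} - x` into `T y = y - x`. Hence in either direction `x = y - T y`, and for this `x`
the partial sums telescope: `S_N = y - T^N y`, so `S_N → y` exactly when `T^N y → 0`. -/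

open Filter Topology ContinuousLinearMap

namespace QMP

variable {H : Type*} [NormedAddCommGroup H] [InnerProductSpace ℂ H] [CompleteSpace H]

/-- `T` is a (quantum) Markov operator on the von Neumann algebra `A`:
a normal, unital, completely positive linear map leaving `A` invariant. -/
structure IsMarkov (A : VonNeumannAlgebra H) (T : (H →L[ℂ] H) → (H →L[ℂ] H)) : Prop where
  linear : IsLinearMap ℂ T
  mapsSelf : ∀ x ∈ A, T x ∈ A
  unital : T 1 = 1
  cp : ∀ (n : ℕ) (a b : Fin n → (H →L[ℂ] H)),
    0 ≤ ∑ i : Fin n, ∑ j : Fin n, star (b i) * T (star (a i) * a j) * b j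
  normal : ∀ {ι : Type} [Preorder ι] [IsDirected ι (· ≤ ·)] (f : ι → (H →L[ℂ] H))
    (y : H →L[ℂ] H), Monotone f → IsLUB (Set.range f) y →
      IsLUB (Set.range fun i => T (f i)) (T y)

/-- `y = ∑ₙ Tⁿ x` with convergence in the strong operator topology. -/
def SOTSum (T : (H →L[ℂ] H) → (H →L[ℂ] H)) (x y : H →L[ℂ] H) : Prop :=
  ∀ η : H, Tendsto (fun N => ∑ n ∈ Finset.range N, (T^[n] x) η) atTop (𝓝 (y η))

/-- `x ∈ A₊` is `T`-summable: `∑ₙ Tⁿ x` converges strongly to an element of `A₊`. -/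
def TSummable (A : VonNeumannAlgebra H) (T : (H →L[ℂ] H) → (H →L[ℂ] H))
    (x : H →L[ℂ] H) : Prop :=
  x ∈ A ∧ 0 ≤ x ∧ ∃ y, y ∈ A ∧ 0 ≤ y ∧ SOTSum T x y

/-- `y` is a potential for `T`: `y = ∑ₙ Tⁿ x` for some `x ∈ A₊`. -/
def IsPotential (A : VonNeumannAlgebra H) (T : (H →L[ℂ] H) → (H →L[ℂ] H))
    (y : H →L[ℂ] H) : Prop :=
  y ∈ A ∧ 0 ≤ y ∧ ∃ x, x ∈ A ∧ 0 ≤ x ∧ SOTSum T x y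

/-- `p` is an orthogonal projection belonging to `A`. -/
def IsProj (A : VonNeumannAlgebra H) (p : H →L[ℂ] H) : Prop :=
  p ∈ A ∧ IsSelfAdjoint p ∧ IsIdempotentElem p

/-- `p` is the support projection of the self-adjoint element `a`. -/
def IsSupport (A : VonNeumannAlgebra H) (a p : H →L[ℂ] H) : Prop :=
  IsProj A p ∧ a = p * a * p ∧ ∀ q, IsProj A q → a = q * a * q → p ≤ q

/-- `s` is the supremum of the family of projections `q` in the projection lattice of `A`. -/
def IsProjSup (A : VonNeumannAlgebra H) {ι : Type*} (q : ι → (H →L[ℂ] H))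
    (s : H →L[ℂ] H) : Prop :=
  IsProj A s ∧ (∀ i, q i ≤ s) ∧ ∀ r, IsProj A r → (∀ i, q i ≤ r) → s ≤ r

end QMP

open QMP Filter Topology

namespace ContinuousLinearMap

variable {𝕜 E : Type*} [RCLike 𝕜] [NormedAddCommGroup E] [InnerProductSpace 𝕜 E]

theorem IsPositive.of_tendsto_apply {ι : Type*} {l : Filter ι} [l.NeBot] {S : ι → E →L[𝕜] E}
    {y : E →L[𝕜] E} (hlim : ∀ η, Tendsto (fun i => S i η) l (𝓝 (y η)))
    (hpos : ∀ᶠ i in l, (S i).IsPositive) : y.IsPositive := by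
  refine ⟨fun a b => ?_, fun η => ?_⟩
  · refine tendsto_nhds_unique ((hlim a).inner tendsto_const_nhds) ?_
    refine ((tendsto_const_nhds (x := a)).inner (hlim b)).congr' ?_
    filter_upwards [hpos] with i hi
    exact (hi.inner_left_eq_inner_right a b).symm
  · refine ge_of_tendsto ((RCLike.continuous_re.tendsto _).comp
      ((hlim η).inner tendsto_const_nhds)) ?_
    filter_upwards [hpos] with i hi
    exact hi.re_inner_nonneg_left η

theorem isLUB_range_of_monotone_of_tendsto_apply {ι : Type*} [SemilatticeSup ι] [Nonempty ι]
    {S : ι → E →L[𝕜] E} {y : E →L[𝕜] E} (hmono : Monotone S)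
    (hlim : ∀ η, Tendsto (fun i => S i η) atTop (𝓝 (y η))) : IsLUB (Set.range S) y := by
  constructor
  · rintro _ ⟨i, rfl⟩
    refine IsPositive.of_tendsto_apply (l := atTop) (S := fun j => S j - S i) (fun η => ?_) ?_
    · simpa using (hlim η).sub_const (S i η)
    · filter_upwards [eventually_ge_atTop i] with j hj
      exact hmono hj
  · intro b hb
    refine IsPositive.of_tendsto_apply (l := atTop) (S := fun j => b - S j) (fun η => ?_) ?_
    · simpa using (hlim η).const_sub (b η)
    · exact Eventually.of_forall fun j => hb ⟨j, rfl⟩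

end ContinuousLinearMap

namespace LinearMap

variable {R M : Type*} [Semiring R] [AddCommGroup M] [Module R M]

theorem sum_range_succ_iterate (f : M →ₗ[R] M) (x : M) (N : ℕ) :
    ∑ n ∈ Finset.range (N + 1), f^[n] x = f (∑ n ∈ Finset.range N, f^[n] x) + x := by
  simp [Finset.sum_range_succ', map_sum, Function.iterate_succ_apply']

theorem sum_range_iterate_sub (f : M →ₗ[R] M) (y : M) (N : ℕ) :
    ∑ n ∈ Finset.range N, f^[n] (y - f y) = y - f^[N] y := by
  simp_rw [iterate_map_sub, ← Function.iterate_succ_apply f]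
  exact Finset.sum_range_sub' _ N

end LinearMap

namespace QMP

variable {H : Type*} [NormedAddCommGroup H] [InnerProductSpace ℂ H]
  {T : (H →L[ℂ] H) → (H →L[ℂ] H)}

theorem sotSum_sub_map_iff (hT : IsLinearMap ℂ T) (y : H →L[ℂ] H) :
    SOTSum T (y - T y) y ↔ ∀ η, Tendsto (fun n => (T^[n] y) η) atTop (𝓝 0) := by
  have hpartial (N : ℕ) (η : H) :
      ∑ n ∈ Finset.range N, (T^[n] (y - T y)) η = y η - (T^[N] y) η := by
    rw [← sum_apply]
    exact congrArg (· η) ((hT.mk' T).sum_range_iterate_sub y N)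
  simp only [SOTSum, hpartial]
  refine forall_congr' fun η => ?_
  constructor <;> intro h <;> simpa using h.const_sub (y η)

variable [CompleteSpace H] {A : VonNeumannAlgebra H}

theorem IsMarkov.map_nonneg (hT : IsMarkov A T) {z : H →L[ℂ] H} (hz : 0 ≤ z) : 0 ≤ T z := by
  have h := hT.cp 1 (fun _ => CFC.sqrt z) (fun _ => 1)
  simp only [Fin.sum_univ_one, star_one, one_mul, mul_one] at h
  rwa [(CFC.sqrt_nonneg z).isSelfAdjoint.star_eq, CFC.sqrt_mul_sqrt_self z hz] at h

theorem IsMarkov.iterate_nonneg (hT : IsMarkov A T) {z : H →L[ℂ] H} (hz : 0 ≤ z) (n : ℕ) :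
    0 ≤ T^[n] z := by
  induction n with
  | zero => exact hz
  | succ n ih => exact Function.iterate_succ_apply' T n z ▸ hT.map_nonneg ih

theorem IsMarkov.map_eq_sub_of_sotSum (hT : IsMarkov A T) {x y : H →L[ℂ] H} (hx : 0 ≤ x)
    (hsum : SOTSum T x y) : T y = y - x := by
  set S : ℕ → H →L[ℂ] H := fun N => ∑ n ∈ Finset.range N, T^[n] x
  have hlim (η : H) : Tendsto (fun N => S N η) atTop (𝓝 (y η)) := by
    simpa only [S, sum_apply] using hsum η
  have hmono : Monotone S := fun M N hMN =>
    Finset.sum_le_sum_of_subset_of_nonneg (Finset.range_mono hMN)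
      fun n _ _ => hT.iterate_nonneg hx n
  have hshift (N : ℕ) : T (S N) = S (N + 1) - x :=
    eq_sub_of_add_eq ((hT.linear.mk' T).sum_range_succ_iterate x N).symm
  refine (hT.normal S y hmono
    (ContinuousLinearMap.isLUB_range_of_monotone_of_tendsto_apply hmono hlim)).unique ?_
  simp only [hshift]
  refine ContinuousLinearMap.isLUB_range_of_monotone_of_tendsto_apply
    (fun M N hMN => sub_le_sub_right (hmono (Nat.succ_le_succ hMN)) x) fun η => ?_
  simpa using ((hlim η).comp (tendsto_add_atTop_nat 1)).sub_const (x η)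

end QMP

theorem isPotential_iff_superharmonic_and_tendsto_zero_general
    {H : Type*} [NormedAddCommGroup H] [InnerProductSpace ℂ H] [CompleteSpace H]
    (A : VonNeumannAlgebra H) (T : (H →L[ℂ] H) → (H →L[ℂ] H)) (hT : IsMarkov A T)
    (y : H →L[ℂ] H) (hy : y ∈ A) :
    (∃ x, x ∈ A ∧ 0 ≤ x ∧ SOTSum T x y) ↔
      (T y ≤ y ∧ ∀ η : H, Tendsto (fun n => (T^[n] y) η) atTop (𝓝 0)) := by
  constructor
  · rintro ⟨x, -, hx0, hsum⟩
    have hTy : T y = y - x := hT.map_eq_sub_of_sotSum hx0 hsum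
    obtain rfl : x = y - T y := by rw [hTy, sub_sub_cancel]
    exact ⟨sub_nonneg.1 hx0, (sotSum_sub_map_iff hT.linear y).1 hsum⟩
  · rintro ⟨hle, htend⟩
    exact ⟨y - T y, sub_mem hy (hT.mapsSelf y hy), sub_nonneg.2 hle,
      (sotSum_sub_map_iff hT.linear y).2 htend⟩

/-- Riesz decomposition, part (a): `y ∈ A₊` is a potential iff `T y ≤ y` and
`Tⁿ y → 0` in the strong operator topology. -/
theorem isPotential_iff_superharmonic_and_tendsto_zero
    {H : Type*} [NormedAddCommGroup H] [InnerProductSpace ℂ H] [CompleteSpace H]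
    (A : VonNeumannAlgebra H) (T : (H →L[ℂ] H) → (H →L[ℂ] H)) (hT : IsMarkov A T)
    (y : H →L[ℂ] H) (hy : y ∈ A) (hy0 : 0 ≤ y) :
    (∃ x, x ∈ A ∧ 0 ≤ x ∧ SOTSum T x y) ↔
      (T y ≤ y ∧ ∀ η : H, Tendsto (fun n => (T^[n] y) η) atTop (𝓝 0)) :=
  isPotential_iff_superharmonic_and_tendsto_zero_general A T hT y hy
end

section
/- Riesz decomposition, part (b): A positive element a ∈ A₊ is superharmonic (T(a) ≤ a) if and only if a = y + h where y is a potential for T and h ∈ A₊ is a fixed point of T (T(h) = h); moreover this decomposition is unique. -/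
/-!
If `T a ≤ a`, the partial sums `∑_{n<N} Tⁿ (a - T a) = a - T^N a` increase and stay below `a`, so
by Vigier's theorem they converge strongly to some `y ≤ a` in `A`; normality of `T` gives
`T y = y - (a - T a)`, hence `h = a - y` is fixed. Conversely `T (y + h) = y - x + h ≤ y + h`.
For uniqueness, `T^k y = y - ∑_{n<k} Tⁿ x → 0` strongly, so `h` is the strong limit of `T^k a`.
-/

open Filter Topology ContinuousLinearMap

open QMP

namespace ContinuousLinearMap

open scoped ComplexOrder

variable {H : Type*} [NormedAddCommGroup H] [InnerProductSpace ℂ H]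

-- Over `ℂ` a real nonnegative quadratic form forces symmetry, so the Loewner order is read off
-- the quadratic forms alone.
theorem le_iff_inner_le (f g : H →L[ℂ] H) : f ≤ g ↔ ∀ x, inner ℂ (f x) x ≤ inner ℂ (g x) x := by
  refine (isPositive_iff_complex _).trans (forall_congr' fun x => ?_)
  rw [← sub_nonneg (b := inner ℂ (f x) x), ← inner_sub_left, ← sub_apply]
  generalize inner ℂ ((g - f) x) x = z
  rw [Complex.nonneg_iff, Complex.ext_iff]
  simp [eq_comm, and_comm]

theorem le_of_tendsto_apply {ι : Type*} {l : Filter ι} [l.NeBot] {f : ι → H →L[ℂ] H}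
    {g c : H →L[ℂ] H} (hf : ∀ x, Tendsto (fun i => f i x) l (𝓝 (g x)))
    (hc : ∀ᶠ i in l, f i ≤ c) : g ≤ c :=
  (le_iff_inner_le g c).2 fun x => le_of_tendsto ((hf x).inner tendsto_const_nhds)
    (hc.mono fun _ h => (le_iff_inner_le _ _).1 h x)

theorem ge_of_tendsto_apply {ι : Type*} {l : Filter ι} [l.NeBot] {f : ι → H →L[ℂ] H}
    {g c : H →L[ℂ] H} (hf : ∀ x, Tendsto (fun i => f i x) l (𝓝 (g x)))
    (hc : ∀ᶠ i in l, c ≤ f i) : c ≤ g :=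
  (le_iff_inner_le c g).2 fun x => ge_of_tendsto ((hf x).inner tendsto_const_nhds)
    (hc.mono fun _ h => (le_iff_inner_le _ _).1 h x)

theorem isLUB_of_monotone_of_tendsto_apply {ι : Type*} [Preorder ι] [IsDirected ι (· ≤ ·)]
    [Nonempty ι] {f : ι → H →L[ℂ] H} {g : H →L[ℂ] H} (hmono : Monotone f)
    (hf : ∀ x, Tendsto (fun i => f i x) atTop (𝓝 (g x))) : IsLUB (Set.range f) g := by
  refine ⟨?_, fun c hc => le_of_tendsto_apply hf (.of_forall fun i => hc ⟨i, rfl⟩)⟩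
  rintro _ ⟨i, rfl⟩
  exact ge_of_tendsto_apply hf (eventually_ge_atTop i |>.mono fun _ h => hmono h)

variable [CompleteSpace H]

theorem norm_apply_sq_le_of_nonneg {B : H →L[ℂ] H} (hB : 0 ≤ B) (x : H) :
    ‖B x‖ ^ 2 ≤ ‖B‖ * RCLike.re (inner ℂ (B x) x) := by
  set s := CFC.sqrt B
  have hs_star : star s = s := (IsSelfAdjoint.of_nonneg (CFC.sqrt_nonneg B)).star_eq
  have hs : star s * s = B := by rw [hs_star, CFC.sqrt_mul_sqrt_self B hB]
  have hsx : ‖s x‖ ^ 2 = RCLike.re (inner ℂ (B x) x) := by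
    rw [apply_norm_sq_eq_inner_adjoint_left, ← hs, star_eq_adjoint]; rfl
  calc ‖B x‖ ^ 2 = ‖s (s x)‖ ^ 2 := by rw [← hs, hs_star]; rfl
    _ ≤ (‖s‖ * ‖s x‖) ^ 2 := by gcongr; exact s.le_opNorm _
    _ = ‖B‖ * RCLike.re (inner ℂ (B x) x) := by
      rw [mul_pow, hsx, sq, ← CStarRing.norm_star_mul_self, hs]

theorem cauchySeq_apply_of_monotone_of_le {f : ℕ → H →L[ℂ] H} {c : H →L[ℂ] H}
    (hmono : Monotone f) (hc : ∀ n, f n ≤ c) (x : H) : CauchySeq fun n => f n x := by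
  set r : ℕ → ℝ := fun n => (inner ℂ (f n x) x).re
  have hr_mono : Monotone r := fun _ _ h =>
    (Complex.le_def.1 ((le_iff_inner_le _ _).1 (hmono h) x)).1
  have hr_bdd : BddAbove (Set.range r) :=
    ⟨(inner ℂ (c x) x).re, by
      rintro _ ⟨n, rfl⟩; exact (Complex.le_def.1 ((le_iff_inner_le _ _).1 (hc n) x)).1⟩
  obtain ⟨L, hrL⟩ : ∃ L, Tendsto r atTop (𝓝 L) := ⟨_, tendsto_atTop_ciSup hr_mono hr_bdd⟩
  -- Vigier: the quadratic forms `r n` converge, and they control the vectors `f n x`.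
  set K := ‖c - f 0‖
  have hdist : ∀ n m, n ≤ m → dist (f n x) (f m x) ^ 2 ≤ K * (r m - r n) := by
    intro n m hnm
    have h0 : 0 ≤ f m - f n := sub_nonneg.2 (hmono hnm)
    have hK : ‖f m - f n‖ ≤ K :=
      CStarAlgebra.norm_le_norm_of_nonneg_of_le h0 (sub_le_sub (hc m) (hmono (Nat.zero_le n)))
    have hre : r m - r n = RCLike.re (inner ℂ ((f m - f n) x) x) := by simp [r]
    calc dist (f n x) (f m x) ^ 2 = ‖(f m - f n) x‖ ^ 2 := by
          rw [dist_comm, dist_eq_norm, sub_apply]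
      _ ≤ ‖f m - f n‖ * RCLike.re (inner ℂ ((f m - f n) x) x) := norm_apply_sq_le_of_nonneg h0 x
      _ ≤ K * (r m - r n) := by
        rw [hre]
        gcongr
        exact ((nonneg_iff_isPositive _).1 h0).re_inner_nonneg_left x
  refine cauchySeq_iff_le_tendsto_0.2
    ⟨fun N => √(K * (L - r N)), fun _ => Real.sqrt_nonneg _, fun n m N hn hm => ?_, ?_⟩
  · wlog hnm : n ≤ m generalizing n m
    · rw [dist_comm]; exact this m n hm hn (le_of_not_ge hnm)
    refine Real.le_sqrt_of_sq_le ((hdist n m hnm).trans ?_)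
    gcongr
    · exact hr_mono.ge_of_tendsto hrL m
    · exact hr_mono hn
  · simpa using ((hrL.const_sub L).const_mul K).sqrt

theorem exists_tendsto_apply_of_monotone_of_le {f : ℕ → H →L[ℂ] H} {c : H →L[ℂ] H}
    (hmono : Monotone f) (hc : ∀ n, f n ≤ c) :
    ∃ g : H →L[ℂ] H, ∀ x, Tendsto (fun n => f n x) atTop (𝓝 (g x)) := by
  choose g hg using fun x =>
    cauchySeq_tendsto_of_complete (cauchySeq_apply_of_monotone_of_le hmono hc x)
  exact ⟨continuousLinearMapOfTendsto f (tendsto_pi_nhds.2 hg), hg⟩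

end ContinuousLinearMap

theorem VonNeumannAlgebra.mem_of_tendsto_apply {H : Type*} [NormedAddCommGroup H]
    [InnerProductSpace ℂ H] [CompleteSpace H] (A : VonNeumannAlgebra H) {ι : Type*}
    {l : Filter ι} [l.NeBot] {f : ι → H →L[ℂ] H} {g : H →L[ℂ] H} (hfA : ∀ i, f i ∈ A)
    (hf : ∀ x, Tendsto (fun i => f i x) l (𝓝 (g x))) : g ∈ A := by
  rw [← SetLike.mem_coe, ← A.centralizer_centralizer, Set.mem_centralizer_iff]
  intro b hb
  ext x
  have hcomm : ∀ i, f i (b x) = b (f i x) := fun i => congr($(hb (f i) (hfA i)) x)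
  refine tendsto_nhds_unique ((b.continuous.tendsto _).comp (hf x)) ?_
  show Tendsto (fun i => b (f i x)) l (𝓝 (g (b x)))
  simpa only [hcomm] using hf (b x)

namespace QMP

open Finset

variable {H : Type*} [NormedAddCommGroup H] [InnerProductSpace ℂ H]
  {T : (H →L[ℂ] H) → (H →L[ℂ] H)}

theorem sotSum_iff {x y : H →L[ℂ] H} :
    SOTSum T x y ↔ ∀ η, Tendsto (fun N => (∑ n ∈ range N, T^[n] x) η) atTop (𝓝 (y η)) := by
  simp only [SOTSum, _root_.sum_apply]

namespace IsMarkov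

variable [CompleteSpace H] {A : VonNeumannAlgebra H}

def toLinearMap (hT : IsMarkov A T) : (H →L[ℂ] H) →ₗ[ℂ] (H →L[ℂ] H) :=
  IsLinearMap.mk' T hT.linear

theorem iterate_map_sub (hT : IsMarkov A T) (n : ℕ) (x y : H →L[ℂ] H) :
    T^[n] (x - y) = T^[n] x - T^[n] y :=
  _root_.iterate_map_sub hT.toLinearMap n x y

theorem iterate_map_add (hT : IsMarkov A T) (n : ℕ) (x y : H →L[ℂ] H) :
    T^[n] (x + y) = T^[n] x + T^[n] y :=
  _root_.iterate_map_add hT.toLinearMap n x y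

theorem map_nonneg_s2 (hT : IsMarkov A T) {x : H →L[ℂ] H} (hx : 0 ≤ x) : 0 ≤ T x := by
  have hsqrt : star (CFC.sqrt x) * CFC.sqrt x = x := by
    rw [(IsSelfAdjoint.of_nonneg (CFC.sqrt_nonneg x)).star_eq, CFC.sqrt_mul_sqrt_self x hx]
  simpa [hsqrt] using hT.cp 1 (fun _ => CFC.sqrt x) (fun _ => 1)

theorem monotone (hT : IsMarkov A T) : Monotone T := fun x y h => by
  simpa [hT.linear.map_sub] using hT.map_nonneg_s2 (sub_nonneg.2 h)

theorem iterate_map_nonneg (hT : IsMarkov A T) {x : H →L[ℂ] H} (hx : 0 ≤ x) (n : ℕ) :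
    0 ≤ T^[n] x :=
  Set.MapsTo.iterate (f := T) (s := {x | 0 ≤ x}) (fun _ => hT.map_nonneg_s2) n hx

theorem map_sum_range_iterate (hT : IsMarkov A T) (x : H →L[ℂ] H) (N : ℕ) :
    T (∑ n ∈ range N, T^[n] x) = ∑ n ∈ range (N + 1), T^[n] x - x := by
  rw [sum_range_succ', Function.iterate_zero_apply, add_sub_cancel_right]
  simp only [Function.iterate_succ_apply']
  exact map_sum hT.toLinearMap _ _

theorem map_eq_sub_of_sotSum_s2 (hT : IsMarkov A T) {x y : H →L[ℂ] H} (hx : 0 ≤ x)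
    (hsum : SOTSum T x y) : T y = y - x := by
  set S : ℕ → H →L[ℂ] H := fun N => ∑ n ∈ range N, T^[n] x
  have hS := sotSum_iff.1 hsum
  have hS_mono : Monotone S := monotone_nat_of_le_succ fun N => by
    simpa [S, sum_range_succ] using hT.iterate_map_nonneg hx N
  have hTS : IsLUB (Set.range fun N => T (S N)) (T y) :=
    hT.normal S y hS_mono (ContinuousLinearMap.isLUB_of_monotone_of_tendsto_apply hS_mono hS)
  have hS_succ : IsLUB (Set.range fun N => S (N + 1) - x) (y - x) :=
    ContinuousLinearMap.isLUB_of_monotone_of_tendsto_apply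
      (fun _ _ h => sub_le_sub_right (hS_mono (Nat.succ_le_succ h)) x)
      fun η => ((hS η).comp (tendsto_add_atTop_nat 1)).sub_const (x η)
  -- `T` need not be strongly continuous: normality carries the supremum through `T`.
  simp only [S, hT.map_sum_range_iterate] at hTS
  exact hTS.unique hS_succ

theorem iterate_eq_sub_of_sotSum (hT : IsMarkov A T) {x y : H →L[ℂ] H} (hx : 0 ≤ x)
    (hsum : SOTSum T x y) (k : ℕ) : T^[k] y = y - ∑ n ∈ range k, T^[n] x := by
  induction k with
  | zero => simp
  | succ k ih =>
    rw [Function.iterate_succ_apply', ih, hT.linear.map_sub, hT.map_eq_sub_of_sotSum_s2 hx hsum,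
      hT.map_sum_range_iterate]
    abel

theorem tendsto_iterate_add_apply (hT : IsMarkov A T) {x y h : H →L[ℂ] H} (hx : 0 ≤ x)
    (hsum : SOTSum T x y) (hh : T h = h) (η : H) :
    Tendsto (fun k => T^[k] (y + h) η) atTop (𝓝 (h η)) := by
  have hfix : ∀ k, T^[k] h = h := fun k => Function.iterate_fixed hh k
  simp only [hT.iterate_map_add, hfix, hT.iterate_eq_sub_of_sotSum hx hsum,
    add_apply, sub_apply]
  simpa using ((sotSum_iff.1 hsum η).const_sub (y η)).add_const (h η)

theorem sum_range_iterate_sub_map (hT : IsMarkov A T) (a : H →L[ℂ] H) (N : ℕ) :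
    ∑ n ∈ range N, T^[n] (a - T a) = a - T^[N] a := by
  simp only [hT.iterate_map_sub]
  exact sum_range_sub' (fun n => T^[n] a) N

theorem exists_sotSum_of_map_le (hT : IsMarkov A T) {a : H →L[ℂ] H} (ha : a ∈ A) (ha0 : 0 ≤ a)
    (hsup : T a ≤ a) : ∃ y ∈ A, 0 ≤ y ∧ y ≤ a ∧ SOTSum T (a - T a) y := by
  set S : ℕ → H →L[ℂ] H := fun N => ∑ n ∈ range N, T^[n] (a - T a)
  have hS : ∀ N, S N = a - T^[N] a := hT.sum_range_iterate_sub_map a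
  have hS_mono : Monotone S := fun M N h => by
    simpa only [hS] using sub_le_sub_left (hT.monotone.antitone_iterate_of_map_le hsup h) a
  have hS_le : ∀ N, S N ≤ a := fun N => by
    simpa only [hS] using sub_le_self a (hT.iterate_map_nonneg ha0 N)
  obtain ⟨y, hy⟩ := ContinuousLinearMap.exists_tendsto_apply_of_monotone_of_le hS_mono hS_le
  have hlub := ContinuousLinearMap.isLUB_of_monotone_of_tendsto_apply hS_mono hy
  refine ⟨y, A.mem_of_tendsto_apply (fun N => ?_) hy, ?_, hlub.2 ?_, sotSum_iff.2 hy⟩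
  · exact sum_mem fun n _ => Set.MapsTo.iterate hT.mapsSelf n (sub_mem ha (hT.mapsSelf a ha))
  · simpa [S] using hlub.1 ⟨0, rfl⟩
  · rintro _ ⟨N, rfl⟩; exact hS_le N

end IsMarkov

end QMP

/-- Riesz decomposition, part (b): `a ∈ A₊` is superharmonic iff `a = y + h` with `y`
a potential and `h ∈ A₊` a fixed point of `T`; such a decomposition is unique. -/
theorem superharmonic_iff_potential_add_fixed
    {H : Type*} [NormedAddCommGroup H] [InnerProductSpace ℂ H] [CompleteSpace H]
    (A : VonNeumannAlgebra H) (T : (H →L[ℂ] H) → (H →L[ℂ] H)) (hT : IsMarkov A T)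
    (a : H →L[ℂ] H) (ha : a ∈ A) (ha0 : 0 ≤ a) :
    (T a ≤ a ↔ ∃ y h, IsPotential A T y ∧ h ∈ A ∧ 0 ≤ h ∧ T h = h ∧ a = y + h) ∧
      (∀ y h y' h', IsPotential A T y → h ∈ A → 0 ≤ h → T h = h → a = y + h →
        IsPotential A T y' → h' ∈ A → 0 ≤ h' → T h' = h' → a = y' + h' →
        y = y' ∧ h = h') := by
  refine ⟨⟨fun hsup => ?_, ?_⟩, ?_⟩
  · have hx0 : 0 ≤ a - T a := sub_nonneg.2 hsup
    obtain ⟨y, hyA, hy0, hya, hsum⟩ := hT.exists_sotSum_of_map_le ha ha0 hsup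
    refine ⟨y, a - y, ⟨hyA, hy0, a - T a, sub_mem ha (hT.mapsSelf a ha), hx0, hsum⟩,
      sub_mem ha hyA, sub_nonneg.2 hya, ?_, by abel⟩
    rw [hT.linear.map_sub, hT.map_eq_sub_of_sotSum_s2 hx0 hsum]
    abel
  · rintro ⟨y, h, ⟨-, -, x, -, hx0, hsum⟩, -, -, hTh, rfl⟩
    rw [hT.linear.map_add, hT.map_eq_sub_of_sotSum_s2 hx0 hsum, hTh]
    exact add_le_add_left (sub_le_self y hx0) h
  · rintro y h y' h' ⟨-, -, x, -, hx0, hsum⟩ - - hTh rfl ⟨-, -, x', -, hx0', hsum'⟩ - - hTh' heq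
    have hh : h = h' := ContinuousLinearMap.ext fun η =>
      tendsto_nhds_unique (hT.tendsto_iterate_add_apply hx0 hsum hTh η)
        (heq ▸ hT.tendsto_iterate_add_apply hx0' hsum' hTh' η)
    subst hh
    exact ⟨add_right_cancel heq, rfl⟩
end

section
/- For the left shift T₀ on ℓ^∞(ℕ), defined by T₀(f)(n) = f(n+1), the set of potentials equals the set of nonnegative decreasing sequences converging to zero, and the set of charges equals the nonnegative elements of ℓ¹(ℕ) ⊆ ℓ^∞(ℕ). -/
/-!
A potential `y` of a nonnegative charge `x` is the sequence of tail sums `y n = ∑_{k ≥ n} x k`,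
so `y n = x n + y (n + 1)`: it is nonnegative, decreasing, and tends to zero as tails of a
convergent series do. Conversely a decreasing null sequence is, by telescoping, the potential of
its decrements `y n - y (n + 1)`. Boundedness comes for free from `x n ≤ y n ≤ y 0`.
-/

open Filter Topology

/-- `y` is the potential of the charge `x` for the left shift: `y n = ∑ₖ x (n + k)`. -/
def IsShiftPotential (x y : ℕ → ℝ) : Prop :=
  ∀ n, HasSum (fun k => x (n + k)) (y n)

namespace IsShiftPotential

variable {x y : ℕ → ℝ}

theorem iff_tendsto_sum_range (hx : ∀ n, 0 ≤ x n) :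
    IsShiftPotential x y ↔
      ∀ n, Tendsto (fun N => ∑ k ∈ Finset.range N, x (n + k)) atTop (𝓝 (y n)) :=
  forall_congr' fun n => hasSum_iff_tendsto_nat_of_nonneg (fun k => hx (n + k)) (y n)

theorem eq_add_succ (h : IsShiftPotential x y) (n : ℕ) : y n = x n + y (n + 1) := by
  have hsucc : HasSum (fun k => x (n + (k + 1))) (y (n + 1)) := by
    simpa only [add_assoc, add_comm 1] using h (n + 1)
  simpa using (h n).unique hsucc.zero_add

theorem summable (h : IsShiftPotential x y) : Summable x := by
  simpa only [zero_add] using (h 0).summable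

theorem nonneg (hx : ∀ n, 0 ≤ x n) (h : IsShiftPotential x y) (n : ℕ) : 0 ≤ y n :=
  (h n).nonneg fun k => hx (n + k)

theorem antitone (hx : ∀ n, 0 ≤ x n) (h : IsShiftPotential x y) : Antitone y :=
  antitone_nat_of_succ_le fun n => by linarith [h.eq_add_succ n, hx n]

theorem tendsto_atTop_zero (h : IsShiftPotential x y) : Tendsto y atTop (𝓝 0) := by
  have hy : y = fun n => ∑' k, x (k + n) := funext fun n => by
    simpa only [add_comm] using (h n).tsum_eq.symm
  exact hy ▸ tendsto_sum_nat_add x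

theorem bddAbove_range (hx : ∀ n, 0 ≤ x n) (h : IsShiftPotential x y) :
    BddAbove (Set.range y) :=
  ⟨y 0, Set.forall_mem_range.2 fun n => h.antitone hx n.zero_le⟩

theorem bddAbove_range_charge (hx : ∀ n, 0 ≤ x n) (h : IsShiftPotential x y) :
    BddAbove (Set.range x) :=
  ⟨y 0, Set.forall_mem_range.2 fun n => by
    linarith [h.eq_add_succ n, h.nonneg hx (n + 1), h.antitone hx n.zero_le]⟩

end IsShiftPotential

theorem Summable.isShiftPotential_tsum {x : ℕ → ℝ} (hx : Summable x) :
    IsShiftPotential x fun n => ∑' k, x (n + k) := fun n => by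
  have htail : Summable fun k => x (n + k) := by
    simpa only [add_comm] using (summable_nat_add_iff n).2 hx
  exact htail.hasSum

theorem Antitone.isShiftPotential_sub_succ {y : ℕ → ℝ} (hy : Antitone y)
    (hlim : Tendsto y atTop (𝓝 0)) : IsShiftPotential (fun n => y n - y (n + 1)) y := by
  refine (IsShiftPotential.iff_tendsto_sum_range fun n => sub_nonneg.2 (hy (n.le_add_right 1))).2
    fun n => ?_
  have htel : ∀ N, ∑ k ∈ Finset.range N, (y (n + k) - y (n + k + 1)) = y n - y (n + N) :=
    fun N => by simpa only [add_zero, add_assoc] using Finset.sum_range_sub' (fun k => y (n + k)) N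
  have htail : Tendsto (fun N => y (n + N)) atTop (𝓝 0) := by
    simpa only [add_comm n, Function.comp_def] using hlim.comp (tendsto_add_atTop_nat n)
  simpa only [htel, sub_zero] using htail.const_sub (y n)

/-- For the left shift `T₀` on `ℓ^∞(ℕ)` (acting on bounded real sequences by
`T₀ f n = f (n+1)`), the potentials are exactly the nonnegative decreasing sequences
tending to zero, and the charges (the `T₀`-summable elements) are exactly the nonnegative
elements of `ℓ¹(ℕ)`. Here `y` is a potential with charge `x` iff
`y n = ∑_{k} x (n + k)` with pointwise convergence of the partial sums. -/
theorem shift_potentials_and_charges :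
    (∀ y : ℕ → ℝ, (BddAbove (Set.range y) ∧
        ∃ x : ℕ → ℝ, (∀ n, 0 ≤ x n) ∧ BddAbove (Set.range x) ∧
          ∀ n, Tendsto (fun N => ∑ k ∈ Finset.range N, x (n + k)) atTop (𝓝 (y n)))
      ↔ ((∀ n, 0 ≤ y n) ∧ Antitone y ∧ Tendsto y atTop (𝓝 0))) ∧
    (∀ x : ℕ → ℝ, ((∀ n, 0 ≤ x n) ∧ BddAbove (Set.range x) ∧
        ∃ y : ℕ → ℝ, BddAbove (Set.range y) ∧
          ∀ n, Tendsto (fun N => ∑ k ∈ Finset.range N, x (n + k)) atTop (𝓝 (y n)))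
      ↔ ((∀ n, 0 ≤ x n) ∧ Summable x)) := by
  refine ⟨fun y => ⟨?_, ?_⟩, fun x => ⟨?_, ?_⟩⟩
  · rintro ⟨-, x, hx, -, hsum⟩
    have h := (IsShiftPotential.iff_tendsto_sum_range hx).2 hsum
    exact ⟨h.nonneg hx, h.antitone hx, h.tendsto_atTop_zero⟩
  · rintro ⟨-, hy, hlim⟩
    have h := hy.isShiftPotential_sub_succ hlim
    have hx : ∀ n, 0 ≤ y n - y (n + 1) := fun n => sub_nonneg.2 (hy (n.le_add_right 1))
    exact ⟨h.bddAbove_range hx, _, hx, h.bddAbove_range_charge hx,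
      (IsShiftPotential.iff_tendsto_sum_range hx).1 h⟩
  · rintro ⟨hx, -, y, -, hsum⟩
    exact ⟨hx, ((IsShiftPotential.iff_tendsto_sum_range hx).2 hsum).summable⟩
  · rintro ⟨hx, hsx⟩
    have h := hsx.isShiftPotential_tsum
    exact ⟨hx, h.bddAbove_range_charge hx, _, h.bddAbove_range hx,
      (IsShiftPotential.iff_tendsto_sum_range hx).1 h⟩
end
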